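/- Let p ≥ 2, σ > 0, μ_T ∈ ℝ^{p_T−1}, μ_S ∈ ℝ^{p_S−1}, Ξ ∈ ℝ^{(p_T−1)×(p_S−1)}, and η_ℓ, η_u, η_t ∈ ℝ. Define C_T(η) = [[1, η μ_Tᵀ],[η μ_T, σ² I + η² μ_T μ_Tᵀ]] ∈ ℝ^{p_T×p_T}, C_S(η) = [[1, η μ_Sᵀ],[η μ_S, σ² I + η² μ_S μ_Sᵀ]] ∈ ℝ^{p_S×p_S}, and the cross matrix A(η) = [[1, η μ_Tᵀ],[η μ_S, σ² Ξᵀ + η² μ_S μ_Tᵀ]] ∈ ℝ^{p_S×p_T} (where Ξᵀ = Sᵀ T). Then tr( A(η_u)ᵀ C_S(η_u)^{-1} C_S(η_t) C_S(η_u)^{-1} A(η_u) · C_T(η_ℓ)^{-1} ) = 1 + ‖Ξ‖_F² + ‖(η_u − η_ℓ) μ_T + (η_t − η_u) Ξ μ_S‖² / σ². -/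

import Mathlib

/-!
Every matrix in the identity is a shear sandwich `L u * diag(1, M) * (L v)ᵀ` with
`L u = [[1, 0], [u, 1]]`: `C(η) = L(ημ) diag(1, σ²I) L(ημ)ᵀ` and
`A(η) = L(ημ_S) diag(1, σ²Ξᵀ) L(ημ_T)ᵀ`. Since `L u * L u' = L (u + u')` and
`diag(1, B) * L u = L (B u) * diag(1, B)`, sandwiches are stable under congruence by shears and
block-diagonal matrices, and `C(η)⁻¹ = L(-ημ)ᵀ diag(1, σ⁻²I) L(-ημ)`. So
`A(η_u)ᵀ C_S(η_u)⁻¹ = X := L(η_u μ_T) diag(1, Ξ) L(-η_u μ_S)`, the product in front of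
`C_T(η_ℓ)⁻¹` is the sandwich `X C_S(η_t) Xᵀ` with block `σ²ΞΞᵀ`, and cycling the trace absorbs the
shears of `C_T(η_ℓ)⁻¹` as well. What is left is
`tr(L v diag(1, σ²ΞΞᵀ) (L v)ᵀ diag(1, σ⁻²I)) = 1 + ‖Ξ‖_F² + ‖v‖²/σ²`.
-/

open Matrix

namespace Matrix

variable {K : Type*} [CommRing K] {m n l : Type*}

theorem trace_mul_transpose_self [Fintype m] [Fintype n] (A : Matrix m n K) :
    trace (A * Aᵀ) = ∑ i, ∑ j, A i j ^ 2 := by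
  simp [trace, mul_apply, sq]

theorem trace_fromBlocks [Fintype m] [Fintype n] (A : Matrix m m K) (B : Matrix m n K)
    (C : Matrix n m K) (D : Matrix n n K) : trace (fromBlocks A B C D) = trace A + trace D := by
  simp [trace, Fintype.sum_sum_type]

def oneBlockDiag (M : Matrix m n K) : Matrix (Fin 1 ⊕ m) (Fin 1 ⊕ n) K :=
  fromBlocks 1 0 0 M

theorem oneBlockDiag_mul_oneBlockDiag [Fintype n] (M : Matrix m n K) (N : Matrix n l K) :
    oneBlockDiag M * oneBlockDiag N = oneBlockDiag (M * N) := by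
  simp [oneBlockDiag, fromBlocks_multiply]

theorem transpose_oneBlockDiag (M : Matrix m n K) : (oneBlockDiag M)ᵀ = oneBlockDiag Mᵀ := by
  simp [oneBlockDiag, fromBlocks_transpose]

variable [DecidableEq l] [DecidableEq m] [DecidableEq n]

def shearCol (u : n → K) : Matrix (Fin 1 ⊕ n) (Fin 1 ⊕ n) K :=
  fromBlocks 1 0 (replicateCol (Fin 1) u) 1

theorem shearCol_zero : shearCol (0 : n → K) = 1 := by
  rw [shearCol, replicateCol_zero, fromBlocks_one]

variable [Fintype l] [Fintype m] [Fintype n]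

def shearSandwich (u : m → K) (M : Matrix m n K) (v : n → K) :
    Matrix (Fin 1 ⊕ m) (Fin 1 ⊕ n) K :=
  shearCol u * oneBlockDiag M * (shearCol v)ᵀ

theorem shearCol_mul_shearCol (u v : n → K) : shearCol u * shearCol v = shearCol (u + v) := by
  simp [shearCol, fromBlocks_multiply, replicateCol_add]

theorem oneBlockDiag_mul_shearCol (M : Matrix m n K) (u : n → K) :
    oneBlockDiag M * shearCol u = shearCol (M *ᵥ u) * oneBlockDiag M := by
  simp [oneBlockDiag, shearCol, fromBlocks_multiply, replicateCol_mulVec]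

theorem shearSandwich_eq_fromBlocks (u : m → K) (M : Matrix m n K) (v : n → K) :
    shearSandwich u M v =
      fromBlocks 1 (replicateRow (Fin 1) v) (replicateCol (Fin 1) u) (M + vecMulVec u v) := by
  simp only [shearSandwich, shearCol, oneBlockDiag, fromBlocks_transpose, fromBlocks_multiply,
    transpose_replicateCol, transpose_one, transpose_zero]
  simp only [mul_one, Matrix.mul_zero, add_comm, zero_add, Matrix.zero_mul, add_zero,
    Matrix.one_mul, Matrix.mul_one, fromBlocks_inj, add_right_inj, true_and]
  exact (vecMulVec_eq (Fin 1) u v).symm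

theorem shearSandwich_smul_smul (η : K) (u : m → K) (M : Matrix m n K) (v : n → K) :
    shearSandwich (η • u) M (η • v) =
      fromBlocks 1 (of fun _ j => η * v j) (of fun i _ => η * u i) (M + η ^ 2 • vecMulVec u v) := by
  rw [shearSandwich_eq_fromBlocks, smul_vecMulVec, vecMulVec_smul, smul_smul, sq]
  rfl

theorem transpose_shearSandwich (u : m → K) (M : Matrix m n K) (v : n → K) :
    (shearSandwich u M v)ᵀ = shearSandwich v Mᵀ u := by
  simp only [shearSandwich, transpose_mul, transpose_transpose, transpose_oneBlockDiag,
    Matrix.mul_assoc]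

theorem shearCol_mul_shearSandwich_mul (w u : m → K) (M : Matrix m n K) (v w' : n → K) :
    shearCol w * shearSandwich u M v * (shearCol w')ᵀ = shearSandwich (w + u) M (w' + v) := by
  simp only [shearSandwich, ← shearCol_mul_shearCol, transpose_mul, Matrix.mul_assoc]

theorem oneBlockDiag_mul_shearSandwich_mul (B : Matrix l m K) (u : m → K) (M : Matrix m n K)
    (v : n → K) (B' : Matrix l n K) :
    oneBlockDiag B * shearSandwich u M v * (oneBlockDiag B')ᵀ =
      shearSandwich (B *ᵥ u) (B * M * B'ᵀ) (B' *ᵥ v) := by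
  calc oneBlockDiag B * shearSandwich u M v * (oneBlockDiag B')ᵀ
      = oneBlockDiag B * shearCol u * oneBlockDiag M * (oneBlockDiag B' * shearCol v)ᵀ := by
        simp only [shearSandwich, transpose_mul, Matrix.mul_assoc]
    _ = shearCol (B *ᵥ u) * (oneBlockDiag B * oneBlockDiag M * (oneBlockDiag B')ᵀ) *
          (shearCol (B' *ᵥ v))ᵀ := by
        simp only [oneBlockDiag_mul_shearCol, transpose_mul, Matrix.mul_assoc]
    _ = shearSandwich (B *ᵥ u) (B * M * B'ᵀ) (B' *ᵥ v) := by
        rw [transpose_oneBlockDiag, oneBlockDiag_mul_oneBlockDiag, oneBlockDiag_mul_oneBlockDiag,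
          shearSandwich]

theorem mul_shearSandwich_mul_transpose (w : l → K) (B : Matrix l m K) (u' u : m → K)
    (M : Matrix m n K) (v v' : n → K) (B' : Matrix l n K) (w' : l → K) :
    shearCol w * oneBlockDiag B * shearCol u' * shearSandwich u M v *
        (shearCol w' * oneBlockDiag B' * shearCol v')ᵀ =
      shearSandwich (w + B *ᵥ (u' + u)) (B * M * B'ᵀ) (w' + B' *ᵥ (v' + v)) := by
  rw [← shearCol_mul_shearSandwich_mul, ← oneBlockDiag_mul_shearSandwich_mul,
    ← shearCol_mul_shearSandwich_mul]
  simp only [transpose_mul, Matrix.mul_assoc]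

theorem inv_shearSandwich {M N : Matrix m m K} (hNM : N * M = 1) (u : m → K) :
    (shearSandwich u M u)⁻¹ = (shearCol (-u))ᵀ * oneBlockDiag N * shearCol (-u) := by
  refine inv_eq_left_inv ?_
  calc (shearCol (-u))ᵀ * oneBlockDiag N * shearCol (-u) * shearSandwich u M u
      = (shearCol (-u))ᵀ * (oneBlockDiag N * (shearCol (-u) * shearCol u) * oneBlockDiag M) *
          (shearCol u)ᵀ := by
        simp only [shearSandwich, Matrix.mul_assoc]
    _ = (shearCol u * shearCol (-u))ᵀ := by
        rw [shearCol_mul_shearCol, neg_add_cancel, shearCol_zero, Matrix.mul_one,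
          oneBlockDiag_mul_oneBlockDiag, hNM, oneBlockDiag, fromBlocks_one, Matrix.mul_one,
          transpose_mul]
    _ = 1 := by rw [shearCol_mul_shearCol, add_neg_cancel, shearCol_zero, transpose_one]

theorem shearSandwich_mul_inv_shearSandwich {M N : Matrix m m K} (hNM : N * M = 1)
    (w : l → K) (M' : Matrix l m K) (u : m → K) :
    shearSandwich w M' u * (shearSandwich u M u)⁻¹ =
      shearCol w * oneBlockDiag (M' * N) * shearCol (-u) := by
  rw [inv_shearSandwich hNM, shearSandwich, ← oneBlockDiag_mul_oneBlockDiag]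
  calc shearCol w * oneBlockDiag M' * (shearCol u)ᵀ *
        ((shearCol (-u))ᵀ * oneBlockDiag N * shearCol (-u))
      = shearCol w * oneBlockDiag M' * (shearCol (-u) * shearCol u)ᵀ * oneBlockDiag N *
          shearCol (-u) := by
        simp only [transpose_mul, Matrix.mul_assoc]
    _ = _ := by
        rw [shearCol_mul_shearCol, neg_add_cancel, shearCol_zero, transpose_one, Matrix.mul_one,
          Matrix.mul_assoc (shearCol w)]

theorem trace_shearSandwich_mul_inv_shearSandwich {M N : Matrix m m K} (hNM : N * M = 1)
    (v u : m → K) (M' : Matrix m m K) :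
    trace (shearSandwich v M' v * (shearSandwich u M u)⁻¹) =
      trace (shearSandwich (-u + v) M' (-u + v) * oneBlockDiag N) := by
  rw [inv_shearSandwich hNM, ← shearCol_mul_shearSandwich_mul, ← Matrix.mul_assoc,
    trace_mul_cycle]
  simp only [Matrix.mul_assoc]

theorem trace_shearSandwich_mul_oneBlockDiag_smul_one (v : m → K) (M : Matrix m m K) (c : K) :
    trace (shearSandwich v M v * oneBlockDiag (c • 1)) = 1 + c * (trace M + v ⬝ᵥ v) := by
  simp [shearSandwich_eq_fromBlocks, oneBlockDiag, fromBlocks_multiply, trace_fromBlocks, mul_add]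

end Matrix

theorem w2s_dominant_trace_identity_general
    (t s : ℕ) (σ : ℝ) (hσ : 0 < σ)
    (μT : Fin t → ℝ) (μS : Fin s → ℝ) (Ξ : Matrix (Fin t) (Fin s) ℝ)
    (ηl ηu ηt : ℝ) :
    let CT : ℝ → Matrix (Fin 1 ⊕ Fin t) (Fin 1 ⊕ Fin t) ℝ := fun η =>
      Matrix.fromBlocks (Matrix.of fun _ _ => 1) (Matrix.of fun _ j => η * μT j)
        (Matrix.of fun i _ => η * μT i)
        (σ ^ 2 • (1 : Matrix (Fin t) (Fin t) ℝ) + η ^ 2 • Matrix.vecMulVec μT μT)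
    let CS : ℝ → Matrix (Fin 1 ⊕ Fin s) (Fin 1 ⊕ Fin s) ℝ := fun η =>
      Matrix.fromBlocks (Matrix.of fun _ _ => 1) (Matrix.of fun _ j => η * μS j)
        (Matrix.of fun i _ => η * μS i)
        (σ ^ 2 • (1 : Matrix (Fin s) (Fin s) ℝ) + η ^ 2 • Matrix.vecMulVec μS μS)
    let A : ℝ → Matrix (Fin 1 ⊕ Fin s) (Fin 1 ⊕ Fin t) ℝ := fun η =>
      Matrix.fromBlocks (Matrix.of fun _ _ => 1) (Matrix.of fun _ j => η * μT j)
        (Matrix.of fun i _ => η * μS i)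
        (σ ^ 2 • Ξᵀ + η ^ 2 • Matrix.vecMulVec μS μT)
    let v : Fin t → ℝ := fun i => (ηu - ηl) * μT i + (ηt - ηu) * (Ξ *ᵥ μS) i
    Matrix.trace ((A ηu)ᵀ * (CS ηu)⁻¹ * CS ηt * (CS ηu)⁻¹ * A ηu * (CT ηl)⁻¹)
      = 1 + (∑ i, ∑ j, Ξ i j ^ 2) + (v ⬝ᵥ v) / σ ^ 2 := by
  intro CT CS A v
  have hone : (of fun _ _ => 1 : Matrix (Fin 1) (Fin 1) ℝ) = 1 := by
    ext i j; fin_cases i; fin_cases j; rfl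
  have hCT : ∀ η, CT η = shearSandwich (η • μT) (σ ^ 2 • 1) (η • μT) := fun η => by
    simp only [CT, hone, shearSandwich_smul_smul]
  have hCS : ∀ η, CS η = shearSandwich (η • μS) (σ ^ 2 • 1) (η • μS) := fun η => by
    simp only [CS, hone, shearSandwich_smul_smul]
  have hA : ∀ η, A η = shearSandwich (η • μS) (σ ^ 2 • Ξᵀ) (η • μT) := fun η => by
    simp only [A, hone, shearSandwich_smul_smul]
  have hc : σ ^ 2 ≠ 0 := by positivity
  have hinv : ∀ k, (σ ^ 2)⁻¹ • (1 : Matrix (Fin k) (Fin k) ℝ) * σ ^ 2 • 1 = 1 := fun k => by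
    rw [Matrix.smul_mul, Matrix.mul_smul, Matrix.one_mul, smul_smul, inv_mul_cancel₀ hc, one_smul]
  set X := shearCol (ηu • μT) * oneBlockDiag Ξ * shearCol (-(ηu • μS))
  have hX : (A ηu)ᵀ * (CS ηu)⁻¹ = X := by
    rw [hA, hCS, transpose_shearSandwich, shearSandwich_mul_inv_shearSandwich (hinv s),
      transpose_smul, transpose_transpose, Matrix.smul_mul, Matrix.mul_smul, Matrix.mul_one,
      smul_smul, mul_inv_cancel₀ hc, one_smul]
  have hXt : (CS ηu)⁻¹ * A ηu = Xᵀ := by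
    rw [← hX, transpose_mul, transpose_transpose, transpose_nonsing_inv, hCS,
      transpose_shearSandwich, transpose_smul, transpose_one]
  have hv : -(ηl • μT) + (ηu • μT + Ξ *ᵥ (-(ηu • μS) + ηt • μS)) = v := by
    ext i
    simp only [v, mulVec_add, mulVec_neg, mulVec_smul, Pi.add_apply, Pi.neg_apply, Pi.smul_apply,
      smul_eq_mul]
    ring
  rw [Matrix.mul_assoc _ (CS ηu)⁻¹ (A ηu), hX, hXt, hCS, mul_shearSandwich_mul_transpose, hCT, trace_shearSandwich_mul_inv_shearSandwich (hinv t),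
    trace_shearSandwich_mul_oneBlockDiag_smul_one, hv, Matrix.mul_smul, Matrix.mul_one, smul_mul,
    trace_smul, trace_mul_transpose_self, smul_eq_mul]
  field_simp
  ring

/-- With `C_T(η)`, `C_S(η)` the teacher/student group second-moment
matrices and `A(η)` the cross matrix (bottom-right block `σ²Ξᵀ + η²μ_Sμ_Tᵀ`), one has
`tr(A(η_u)ᵀ C_S(η_u)⁻¹ C_S(η_t) C_S(η_u)⁻¹ A(η_u) C_T(η_ℓ)⁻¹)
  = 1 + ‖Ξ‖_F² + ‖(η_u − η_ℓ)μ_T + (η_t − η_u)Ξμ_S‖²/σ²`. -/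
theorem w2s_dominant_trace_identity
    (t s : ℕ) (ht : 1 ≤ t) (hs : 1 ≤ s) (σ : ℝ) (hσ : 0 < σ)
    (μT : Fin t → ℝ) (μS : Fin s → ℝ) (Ξ : Matrix (Fin t) (Fin s) ℝ)
    (ηl ηu ηt : ℝ) :
    let CT : ℝ → Matrix (Fin 1 ⊕ Fin t) (Fin 1 ⊕ Fin t) ℝ := fun η =>
      Matrix.fromBlocks (Matrix.of fun _ _ => 1) (Matrix.of fun _ j => η * μT j)
        (Matrix.of fun i _ => η * μT i)
        (σ ^ 2 • (1 : Matrix (Fin t) (Fin t) ℝ) + η ^ 2 • Matrix.vecMulVec μT μT)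
    let CS : ℝ → Matrix (Fin 1 ⊕ Fin s) (Fin 1 ⊕ Fin s) ℝ := fun η =>
      Matrix.fromBlocks (Matrix.of fun _ _ => 1) (Matrix.of fun _ j => η * μS j)
        (Matrix.of fun i _ => η * μS i)
        (σ ^ 2 • (1 : Matrix (Fin s) (Fin s) ℝ) + η ^ 2 • Matrix.vecMulVec μS μS)
    let A : ℝ → Matrix (Fin 1 ⊕ Fin s) (Fin 1 ⊕ Fin t) ℝ := fun η =>
      Matrix.fromBlocks (Matrix.of fun _ _ => 1) (Matrix.of fun _ j => η * μT j)
        (Matrix.of fun i _ => η * μS i)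
        (σ ^ 2 • Ξᵀ + η ^ 2 • Matrix.vecMulVec μS μT)
    let v : Fin t → ℝ := fun i => (ηu - ηl) * μT i + (ηt - ηu) * (Ξ *ᵥ μS) i
    Matrix.trace ((A ηu)ᵀ * (CS ηu)⁻¹ * CS ηt * (CS ηu)⁻¹ * A ηu * (CT ηl)⁻¹)
      = 1 + (∑ i, ∑ j, Ξ i j ^ 2) + (v ⬝ᵥ v) / σ ^ 2 :=
  w2s_dominant_trace_identity_general t s σ hσ μT μS Ξ ηl ηu ηt
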